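/- arXiv:1902.08801 — 4 statements merged into one kernel-verified Lean document; each statement's English description precedes it below -/
import Mathlib

section
/- If a finite collection of arithmetic progressions A_1, ..., A_k in \mathbb{Z}, where A_i (when nonempty) has common difference d_i, covers all of \mathbb{Z}, then \sum over the nonempty A_i of 1/d_i is at least 1. -/
open Classical in
theorem ap_cover_density_sum (k : ℕ) (A : Fin k → Set ℤ) (d : Fin k → ℕ)
    (hd : ∀ i, 1 ≤ d i)
    (hAP : ∀ i, A i = ∅ ∨ ∃ a : ℤ, A i = {x : ℤ | ∃ n : ℤ, x = a + n * (d i : ℤ)})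
    (hcover : (⋃ i, A i) = Set.univ) :
    1 ≤ ∑ i ∈ Finset.univ.filter (fun i => A i ≠ ∅), (1 : ℚ) / (d i : ℚ) := by
  set N : ℕ := ∏ i, d i with hN
  have hNpos : 0 < N := Finset.prod_pos (fun i _ => hd i)
  have hdvd : ∀ i, d i ∣ N := fun i => Finset.dvd_prod_of_mem _ (Finset.mem_univ i)
  set F := Finset.univ.filter (fun i : Fin k => A i ≠ ∅) with hF
  set S : Fin k → Finset ℤ := fun i => (Finset.Ico (0:ℤ) (N:ℤ)).filter (· ∈ A i) with hS
  have hcard : ∀ i ∈ F, (S i).card ≤ N / d i := by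
    intro i hi
    have hAne : A i ≠ ∅ := (Finset.mem_filter.mp hi).2
    obtain ⟨a, ha⟩ := (hAP i).resolve_left hAne
    have hdpos : (0:ℤ) < d i := by exact_mod_cast hd i
    have hsub : S i ⊆ (Finset.Ico (0:ℤ) ((N / d i : ℕ) : ℤ)).image
        (fun m => a % d i + m * d i) := by
      intro x hx
      simp only [hS, Finset.mem_filter, Finset.mem_Ico] at hx
      obtain ⟨⟨hx0, hxN⟩, hxA⟩ := hx
      rw [ha] at hxA
      obtain ⟨n, hn⟩ := hxA
      have hmod : x % d i = a % d i := by
        rw [hn]; simp [Int.add_mul_emod_self_left]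
      refine Finset.mem_image.mpr ⟨x / d i, ?_, ?_⟩
      · rw [Finset.mem_Ico]
        constructor
        · exact Int.ediv_nonneg hx0 (le_of_lt hdpos)
        · by_contra hlt
          push_neg at hlt
          have hq0 : ((N / d i : ℕ) : ℤ) * d i ≤ x / d i * d i :=
            mul_le_mul_of_nonneg_right hlt hdpos.le
          have hNd : ((N / d i : ℕ) : ℤ) * d i = (N:ℤ) := by
            exact_mod_cast Nat.div_mul_cancel (hdvd i)
          have hdm := Int.mul_ediv_add_emod x (d i)
          have hm0 : 0 ≤ x % d i := Int.emod_nonneg x (by positivity)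
          nlinarith [hq0, hNd, hdm, hm0]
      · have := Int.mul_ediv_add_emod x (d i)
        rw [hmod] at this
        linarith [this]
    calc (S i).card ≤ _ := Finset.card_le_card hsub
      _ ≤ (Finset.Ico (0:ℤ) ((N / d i : ℕ) : ℤ)).card := Finset.card_image_le
      _ = N / d i := by
          rw [Int.card_Ico, sub_zero]; exact Int.toNat_natCast _
  have hcover' : Finset.Ico (0:ℤ) (N:ℤ) ⊆ F.biUnion S := by
    intro x hx
    have : x ∈ ⋃ i, A i := by rw [hcover]; trivial
    obtain ⟨i, hi⟩ := Set.mem_iUnion.mp this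
    refine Finset.mem_biUnion.mpr ⟨i, ?_, ?_⟩
    · exact Finset.mem_filter.mpr ⟨Finset.mem_univ i, Set.nonempty_iff_ne_empty.mp ⟨x, hi⟩⟩
    · exact Finset.mem_filter.mpr ⟨hx, hi⟩
  have h1 : N ≤ ∑ i ∈ F, N / d i := by
    calc N = (Finset.Ico (0:ℤ) (N:ℤ)).card := by simp
      _ ≤ (F.biUnion S).card := Finset.card_le_card hcover'
      _ ≤ ∑ i ∈ F, (S i).card := Finset.card_biUnion_le
      _ ≤ ∑ i ∈ F, N / d i := Finset.sum_le_sum hcard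
  have h2 : (N:ℚ) ≤ ∑ i ∈ F, (N:ℚ) / (d i : ℚ) := by
    calc (N:ℚ) ≤ ((∑ i ∈ F, N / d i : ℕ) : ℚ) := by exact_mod_cast h1
      _ = ∑ i ∈ F, ((N / d i : ℕ) : ℚ) := by push_cast; rfl
      _ = ∑ i ∈ F, (N:ℚ) / (d i : ℚ) := by
          refine Finset.sum_congr rfl fun i _ => ?_
          rw [Nat.cast_div (hdvd i) (Nat.cast_ne_zero.mpr (by have := hd i; omega))]
  have hNQ : (0:ℚ) < (N:ℚ) := by exact_mod_cast hNpos
  have h3 : (N:ℚ) * 1 ≤ (N:ℚ) * ∑ i ∈ F, (1:ℚ) / (d i : ℚ) := by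
    rw [mul_one, Finset.mul_sum]
    simpa [div_eq_mul_inv, mul_comm, mul_assoc] using h2
  exact le_of_mul_le_mul_left h3 hNQ
end

section
/- Let K be a field containing a primitive cube root of unity \omega, and let a, b, c, d \in K satisfy abcd = -1 and ac + bd = \omega(ad + bc), with (a+d^{-1})(c^{-1}+b) \neq 0. Then the cross ratio ((a+b)(c^{-1}+d^{-1}))/((a+d^{-1})(c^{-1}+b)) equals -\omega^2. -/
/-!
Clearing the inverses by multiplying numerator and denominator by `c * d`, the cross ratio becomes
`(a + b) * (c + d) / ((a * d + 1) * (b * c + 1))`. Since `a * b * c * d = -1`, the denominator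
expands to `a * d + b * c`, while the relation and `1 + ω = -ω ^ 2` turn the numerator into
`-ω ^ 2 * (a * d + b * c)`.
-/

section CommRing

variable {R : Type*} [CommRing R]

theorem mul_add_one_mul_add_one_of_mul_eq_neg_one {a b c d : R}
    (habcd : a * b * c * d = -1) :
    (a * d + 1) * (b * c + 1) = a * d + b * c := by
  linear_combination habcd

theorem add_mul_add_eq_neg_sq_mul_of_cube_root {ω a b c d : R} (hω : ω ^ 2 + ω + 1 = 0)
    (hrel : a * c + b * d = ω * (a * d + b * c)) :
    (a + b) * (c + d) = -ω ^ 2 * (a * d + b * c) := by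
  linear_combination hrel + (a * d + b * c) * hω

end CommRing

section Field

variable {K : Type*} [Field K]

theorem cross_ratio_eq_div_of_ne_zero {a b c d : K} (hc : c ≠ 0) (hd : d ≠ 0) :
    (a + b) * (c⁻¹ + d⁻¹) / ((a + d⁻¹) * (c⁻¹ + b)) =
      (a + b) * (c + d) / ((a * d + 1) * (b * c + 1)) := by
  rw [← mul_div_mul_right _ _ (mul_ne_zero hc hd)]
  congr 1 <;> field_simp <;> ring

end Field

theorem cross_ratio_three_torsion_general {K : Type*} [Field K]
    (ω a b c d : K) (hω : ω ^ 2 + ω + 1 = 0)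
    (hc : c ≠ 0) (hd : d ≠ 0)
    (habcd : a * b * c * d = -1)
    (hrel : a * c + b * d = ω * (a * d + b * c))
    (h1 : a + d⁻¹ ≠ 0) (h2 : c⁻¹ + b ≠ 0) :
    (a + b) * (c⁻¹ + d⁻¹) / ((a + d⁻¹) * (c⁻¹ + b)) = -ω ^ 2 := by
  have had : (a + d⁻¹) * d = a * d + 1 := by rw [add_mul, inv_mul_cancel₀ hd]
  have hbc : (c⁻¹ + b) * c = b * c + 1 := by rw [add_mul, inv_mul_cancel₀ hc, add_comm]
  have hden : (a * d + 1) * (b * c + 1) ≠ 0 := by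
    rw [← had, ← hbc]
    exact mul_ne_zero (mul_ne_zero h1 hd) (mul_ne_zero h2 hc)
  rw [mul_add_one_mul_add_one_of_mul_eq_neg_one habcd] at hden
  rw [cross_ratio_eq_div_of_ne_zero hc hd, mul_add_one_mul_add_one_of_mul_eq_neg_one habcd,
    add_mul_add_eq_neg_sq_mul_of_cube_root hω hrel, mul_div_cancel_right₀ _ hden]

theorem cross_ratio_three_torsion {K : Type*} [Field K] (h3 : (3 : K) ≠ 0)
    (ω a b c d : K) (hω : ω ^ 2 + ω + 1 = 0)
    (ha : a ≠ 0) (hb : b ≠ 0) (hc : c ≠ 0) (hd : d ≠ 0)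
    (habcd : a * b * c * d = -1)
    (hrel : a * c + b * d = ω * (a * d + b * c))
    (h1 : a + d⁻¹ ≠ 0) (h2 : c⁻¹ + b ≠ 0) :
    (a + b) * (c⁻¹ + d⁻¹) / ((a + d⁻¹) * (c⁻¹ + b)) = -ω ^ 2 :=
  cross_ratio_three_torsion_general ω a b c d hω hc hd habcd hrel h1 h2
end

section
/- Let c be an element of a field K with char(K) \neq 3 and c \neq 0. If (x, y) \in K^2 satisfies y(x^3 - 1) = c(y^3 - x^3) and x(1 - y^3) = c(y^3 - x^3) with y^3 \neq x^3, then x^{-1} + y^{-1} = -c^{-1} and x satisfies c x^4 + 2c^2 x^3 + (2c^3 + 1)x^2 + 2c x + c^2 = 0. -/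
theorem hessian_doubling_system {K : Type*} [Field K] (h3 : (3 : K) ≠ 0)
    (c x y : K) (hc : c ≠ 0) (hx : x ≠ 0) (hy : y ≠ 0) (hxy : y ^ 3 ≠ x ^ 3)
    (h1 : y * (x ^ 3 - 1) = c * (y ^ 3 - x ^ 3))
    (h2 : x * (1 - y ^ 3) = c * (y ^ 3 - x ^ 3)) :
    x⁻¹ + y⁻¹ = -c⁻¹ ∧
      c * x ^ 4 + 2 * c ^ 2 * x ^ 3 + (2 * c ^ 3 + 1) * x ^ 2 + 2 * c * x + c ^ 2 = 0 := by
  have hsub : x ^ 3 - y ^ 3 ≠ 0 := sub_ne_zero.mpr (Ne.symm hxy)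
  have hT : c * (x + y) + x * y = 0 := by
    have h0 : (x ^ 3 - y ^ 3) * (c * (x + y) + x * y) = 0 := by
      linear_combination x * h1 + y * h2
    rcases mul_eq_zero.mp h0 with h | h
    · exact absurd h hsub
    · exact h
  have hcx : c + x ≠ 0 := by
    intro h
    apply hc
    have hx0 : c * x = 0 := by linear_combination hT - y * h
    rcases mul_eq_zero.mp hx0 with h' | h'
    · exact h'
    · exact absurd h' hx
  have hE : y * (c + x) + c * x = 0 := by linear_combination hT
  have hD : x * y * (x ^ 2 + y ^ 2) - (x + y) = 0 := by linear_combination h1 - h2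
  constructor
  · field_simp
    linear_combination hT
  · have hQ : x ^ 2 * (c * x ^ 4 + 2 * c ^ 2 * x ^ 3 + (2 * c ^ 3 + 1) * x ^ 2
        + 2 * c * x + c ^ 2) = 0 := by
      linear_combination (-(c + x) ^ 3) * hD +
        (x * (y ^ 2 * (c + x) ^ 2 - c * x * y * (c + x) + c ^ 2 * x ^ 2)
          + x ^ 3 * (c + x) ^ 2 - (c + x) ^ 2) * hE
    rcases mul_eq_zero.mp hQ with h | h
    · exact absurd h (pow_ne_zero 2 hx)
    · exact h
end

section
/- In PSL_2(\mathbb{Z}/p\mathbb{Z}) for a prime p \geq 5, the normalizer of a subgroup of order p has order p(p-1)/2. -/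
/-!
Let `T ≤ PSL(2, p)` be the image of the upper unitriangular matrices; it has order `p`. Since
`|PSL(2, p)| = p (p² - 1) / 2`, the subgroups of order `p` are exactly the Sylow `p`-subgroups, so
their normalizers all have index `n_p`, the number of Sylow `p`-subgroups. The image of the upper
triangular (Borel) subgroup normalizes `T` and has index `p + 1`, hence `n_p ∣ p + 1`. Together with
`n_p ≡ 1 [MOD p]` and `n_p ≠ 1` (conjugating by `!![0, -1; 1, 0]` moves `T` off the Borel
subgroup, so `T` is not normal) this forces `n_p = p + 1`, and the normalizer has order
`|PSL(2, p)| / (p + 1) = p (p - 1) / 2`.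
-/

open scoped MatrixGroups

namespace Matrix.SpecialLinearGroup

lemma card_mul_card_units {ι R : Type*} [Fintype ι] [DecidableEq ι] [Nonempty ι] [CommRing R] :
    Nat.card (SpecialLinearGroup ι R) * Nat.card Rˣ = Nat.card (GL ι R) := by
  have hker : Nat.card (GeneralLinearGroup.det : GL ι R →* Rˣ).ker =
      Nat.card (SpecialLinearGroup ι R) := by
    rw [← Nat.card_range_of_injective toGL_injective, range_toGL]
    rfl
  rw [← (GeneralLinearGroup.det : GL ι R →* Rˣ).ker.card_mul_index, hker, Subgroup.index_ker,
    MonoidHom.range_eq_top.mpr GeneralLinearGroup.det_surjective, Subgroup.card_top (G := Rˣ)]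

section CommRing

variable {R : Type*} [CommRing R]

def upperUnitriangular (t : R) : SL(2, R) := ⟨!![1, t; 0, 1], by simp⟩

@[simp]
lemma coe_upperUnitriangular (t : R) :
    (upperUnitriangular t : Matrix (Fin 2) (Fin 2) R) = !![1, t; 0, 1] := rfl

variable (R) in
def unipotent : Multiplicative R →* SL(2, R) where
  toFun t := upperUnitriangular t.toAdd
  map_one' := by ext : 1; simp [one_fin_two]
  map_mul' s t := by ext : 1; simp [add_comm]

@[simp]
lemma unipotent_apply (t : Multiplicative R) : unipotent R t = upperUnitriangular t.toAdd := rfl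

variable (R) in
def upperTriangular : Subgroup SL(2, R) where
  carrier := {A | A 1 0 = 0}
  one_mem' := by simp
  mul_mem' {A B} hA hB := by
    simp_all [Matrix.mul_apply, Fin.sum_univ_two]
  inv_mem' {A} hA := by
    simp_all [coe_inv, adjugate_fin_two]

lemma mem_upperTriangular {A : SL(2, R)} : A ∈ upperTriangular R ↔ A 1 0 = 0 := Iff.rfl

lemma range_unipotent_le_upperTriangular : (unipotent R).range ≤ upperTriangular R := by
  rintro _ ⟨t, rfl⟩
  simp [mem_upperTriangular]

lemma center_le_upperTriangular : Subgroup.center SL(2, R) ≤ upperTriangular R := by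
  intro A hA
  obtain ⟨r, -, hr⟩ := mem_center_iff.mp hA
  simp [mem_upperTriangular, ← hr]

lemma mul_eq_one_of_mem_upperTriangular {A : SL(2, R)} (hA : A ∈ upperTriangular R) :
    A 0 0 * A 1 1 = 1 := by
  have := A.det_coe
  rwa [det_fin_two, mem_upperTriangular.mp hA, mul_zero, sub_zero] at this

lemma conj_upperUnitriangular {A : SL(2, R)} (hA : A ∈ upperTriangular R) (t : R) :
    A * upperUnitriangular t * A⁻¹ = upperUnitriangular (A 0 0 ^ 2 * t) := by
  have h10 := mem_upperTriangular.mp hA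
  have hdet := mul_eq_one_of_mem_upperTriangular hA
  ext i j
  fin_cases i <;> fin_cases j <;>
    simp only [Fin.zero_eta, Fin.isValue, Fin.mk_one, coe_mul, coe_upperUnitriangular, coe_inv,
      adjugate_fin_two, h10, neg_zero, mul_apply, of_apply, cons_val', cons_val_fin_one,
      Fin.sum_univ_two, cons_val_zero, cons_val_one, mul_one, mul_zero, mul_neg, zero_mul, add_zero,
      zero_add]
  · exact hdet
  · ring
  · rwa [mul_comm]

lemma upperTriangular_le_normalizer :
    upperTriangular R ≤ Subgroup.normalizer ((unipotent R).range : Set SL(2, R)) := by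
  rw [Subgroup.le_normalizer_iff]
  rintro A hA _ ⟨t, rfl⟩
  exact ⟨Multiplicative.ofAdd (A 0 0 ^ 2 * t.toAdd), by simp [conj_upperUnitriangular hA]⟩

def upperTriangularEquiv : upperTriangular R ≃ Rˣ × R where
  toFun A := (Units.mkOfMulEqOne _ _ (mul_eq_one_of_mem_upperTriangular A.2), A.1 0 1)
  invFun x := ⟨⟨!![(x.1 : R), x.2; 0, ((x.1⁻¹ : Rˣ) : R)], by simp⟩, rfl⟩
  left_inv A := by
    have hA := mem_upperTriangular.mp A.2
    ext i j
    fin_cases i <;> fin_cases j <;>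
      simp only [Fin.isValue, Units.val_mkOfMulEqOne, Fin.zero_eta, Fin.mk_one, of_apply, cons_val',
        cons_val_zero, cons_val_one, cons_val_fin_one, hA]
    rfl
  right_inv x := rfl

lemma card_upperTriangular : Nat.card (upperTriangular R) = Nat.card Rˣ * Nat.card R := by
  rw [Nat.card_congr upperTriangularEquiv, Nat.card_prod]

abbrev toPSL {n : Type*} [Fintype n] [DecidableEq n] :
    SpecialLinearGroup n R →* ProjectiveSpecialLinearGroup n R :=
  QuotientGroup.mk' _

lemma injective_toPSL_comp_unipotent : Function.Injective (toPSL.comp (unipotent R)) := by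
  refine (injective_iff_map_eq_one _).mpr fun t ht => ?_
  rw [MonoidHom.comp_apply, QuotientGroup.mk'_apply, QuotientGroup.eq_one_iff] at ht
  obtain ⟨r, -, hr⟩ := mem_center_iff.mp ht
  have h01 : (0 : R) = t.toAdd := by simpa using congrFun (congrFun hr 0) 1
  exact toAdd_eq_zero.mp h01.symm

lemma not_normal_map_range_unipotent [Nontrivial R] :
    ¬ ((unipotent R).range.map toPSL).Normal := by
  intro hN
  have hpre := hN.comap toPSL
  rw [Subgroup.comap_map_eq, QuotientGroup.ker_mk'] at hpre
  let w : SL(2, R) := ⟨!![0, -1; 1, 0], by simp⟩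
  have hconj : w * unipotent R (.ofAdd 1) * w⁻¹ ∈ upperTriangular R :=
    sup_le range_unipotent_le_upperTriangular center_le_upperTriangular <|
      hpre.conj_mem _ (Subgroup.mem_sup_left ⟨_, rfl⟩) w
  rw [mem_upperTriangular, coe_mul, coe_mul, coe_inv] at hconj
  simp [w, adjugate_fin_two, mul_apply, Fin.sum_univ_two] at hconj

lemma card_map_range_unipotent : Nat.card ((unipotent R).range.map toPSL) = Nat.card R := by
  rw [← MonoidHom.range_comp,
    Nat.card_congr (MonoidHom.ofInjective injective_toPSL_comp_unipotent).toEquiv.symm]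
  rfl

lemma map_upperTriangular_le_normalizer :
    (upperTriangular R).map toPSL ≤
      Subgroup.normalizer ((unipotent R).range.map toPSL : Set PSL(2, R)) :=
  (Subgroup.map_mono upperTriangular_le_normalizer).trans (Subgroup.le_normalizer_map _)

end CommRing

section FiniteField

variable {F : Type*} [Field F] [Finite F]

lemma card_SL_two : Nat.card SL(2, F) = Nat.card F * (Nat.card F ^ 2 - 1) := by
  have := Fintype.ofFinite F
  have hq : 1 < Nat.card F := Finite.one_lt_card
  have h := card_mul_card_units (ι := Fin 2) (R := F)
  rw [card_GL_field, Nat.card_units, ← Nat.card_eq_fintype_card, Fin.prod_univ_two] at h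
  refine Nat.eq_of_mul_eq_mul_right (Nat.sub_pos_of_lt hq) (h.trans ?_)
  have hsub : Nat.card F ^ 2 - Nat.card F = Nat.card F * (Nat.card F - 1) := by
    rw [Nat.mul_sub_one, sq]
  simp only [Fin.val_zero, Fin.val_one, pow_zero, pow_one, hsub]
  ring

lemma index_upperTriangular : (upperTriangular F).index = Nat.card F + 1 := by
  have hq : 1 < Nat.card F := Finite.one_lt_card
  have h := (upperTriangular F).card_mul_index
  have hsq : Nat.card F ^ 2 - 1 = (Nat.card F + 1) * (Nat.card F - 1) := by
    simpa using Nat.sq_sub_sq (Nat.card F) 1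
  rw [card_upperTriangular, card_SL_two, Nat.card_units, hsq] at h
  refine Nat.eq_of_mul_eq_mul_left (Nat.mul_pos (Nat.sub_pos_of_lt hq) (by omega)) (h.trans ?_)
  ring

omit [Finite F] in
lemma card_center_SL_two (hF : ringChar F ≠ 2) : Nat.card (Subgroup.center SL(2, F)) = 2 := by
  rw [Nat.card_congr (center_equiv_rootsOfUnity' 0).toEquiv, Fintype.card_fin]
  exact (IsPrimitiveRoot.neg_one (ringChar F) hF).card_rootsOfUnity

lemma card_PSL_two (hF : ringChar F ≠ 2) :
    2 * Nat.card PSL(2, F) = Nat.card F * (Nat.card F ^ 2 - 1) := by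
  have h := Subgroup.card_eq_card_quotient_mul_card_subgroup (Subgroup.center SL(2, F))
  rw [card_SL_two, card_center_SL_two hF] at h
  rw [h, mul_comm]

lemma index_map_upperTriangular : ((upperTriangular F).map toPSL).index = Nat.card F + 1 := by
  rw [Subgroup.index_map_eq _ (QuotientGroup.mk'_surjective _)
    (by rw [QuotientGroup.ker_mk']; exact center_le_upperTriangular), index_upperTriangular]

end FiniteField

end Matrix.SpecialLinearGroup

theorem Nat.eq_add_one_of_dvd_add_one_of_modEq_one {d p : ℕ} (hd : d ∣ p + 1)
    (hmod : d ≡ 1 [MOD p]) (hne : d ≠ 1) : d = p + 1 := by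
  have hpos : 0 < d := Nat.pos_of_dvd_of_pos hd p.succ_pos
  have hle : d ≤ p + 1 := Nat.le_of_dvd p.succ_pos hd
  have hdvd : p ∣ d - 1 := (Nat.modEq_iff_dvd' hpos).mp hmod.symm
  have : p ≤ d - 1 := Nat.le_of_dvd (by omega) hdvd
  omega

open Matrix.SpecialLinearGroup

namespace Matrix.ProjectiveSpecialLinearGroup

variable {p : ℕ} [Fact p.Prime]

lemma card_PSL_two_zmod (hp : p ≠ 2) : 2 * Nat.card PSL(2, ZMod p) = p * (p ^ 2 - 1) := by
  simpa using card_PSL_two (F := ZMod p) (by rwa [ZMod.ringChar_zmod_n])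

lemma not_dvd_index_of_card_eq (hp : p ≠ 2) {H : Subgroup PSL(2, ZMod p)} (hH : Nat.card H = p) :
    ¬ p ∣ H.index := by
  have hp0 : 0 < p := (Fact.out : p.Prime).pos
  have h2 : 2 * H.index = p ^ 2 - 1 := by
    apply Nat.eq_of_mul_eq_mul_left hp0
    rw [← card_PSL_two_zmod hp, ← H.card_mul_index, hH]
    ring
  have h1 : p ∣ 2 * H.index + 1 := by
    rw [h2, Nat.sub_add_cancel (Nat.one_le_pow _ _ hp0)]
    exact dvd_pow_self p two_ne_zero
  exact fun h => (Fact.out : p.Prime).not_dvd_one ((Nat.dvd_add_right (h.mul_left 2)).mp h1)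

lemma index_normalizer_eq_card_sylow (hp : p ≠ 2) {H : Subgroup PSL(2, ZMod p)}
    (hH : Nat.card H = p) : (Subgroup.normalizer (H : Set PSL(2, ZMod p))).index =
      Nat.card (Sylow p PSL(2, ZMod p)) :=
  (Sylow.card_eq_index_normalizer <| IsPGroup.toSylow
    (IsPGroup.of_card (n := 1) (by rw [hH, pow_one])) (not_dvd_index_of_card_eq hp hH)).symm

lemma card_sylow_PSL_two_zmod (hp : p ≠ 2) : Nat.card (Sylow p PSL(2, ZMod p)) = p + 1 := by
  set U := (unipotent (ZMod p)).range.map toPSL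
  have hU : Nat.card U = p := by rw [card_map_range_unipotent, Nat.card_zmod]
  rw [← index_normalizer_eq_card_sylow hp hU]
  refine Nat.eq_add_one_of_dvd_add_one_of_modEq_one ?_ ?_ ?_
  · have h := Subgroup.index_dvd_of_le (map_upperTriangular_le_normalizer (R := ZMod p))
    rwa [index_map_upperTriangular, Nat.card_zmod] at h
  · exact index_normalizer_eq_card_sylow hp hU ▸ card_sylow_modEq_one p _
  · rw [Ne, Subgroup.index_eq_one, Subgroup.normalizer_eq_top_iff]
    exact not_normal_map_range_unipotent

end Matrix.ProjectiveSpecialLinearGroup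

open Matrix.ProjectiveSpecialLinearGroup

theorem normalizer_of_order_p_subgroup_PSL (p : ℕ) [Fact p.Prime] (hp : 5 ≤ p)
    (H : Subgroup (Matrix.ProjectiveSpecialLinearGroup (Fin 2) (ZMod p)))
    (hH : Nat.card H = p) :
    Nat.card (Subgroup.normalizer (H : Set (Matrix.ProjectiveSpecialLinearGroup (Fin 2) (ZMod p)))) = p * (p - 1) / 2 := by
  have hp2 : p ≠ 2 := by omega
  set N := Subgroup.normalizer (H : Set PSL(2, ZMod p))
  have hindex := N.card_mul_index
  rw [index_normalizer_eq_card_sylow hp2 hH, card_sylow_PSL_two_zmod hp2] at hindex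
  have hsq : p ^ 2 - 1 = (p - 1) * (p + 1) := by simpa [mul_comm] using Nat.sq_sub_sq p 1
  have h2 : Nat.card N * 2 * (p + 1) = p * (p - 1) * (p + 1) := by
    calc Nat.card N * 2 * (p + 1) = 2 * (Nat.card N * (p + 1)) := by ring
      _ = p * (p ^ 2 - 1) := by rw [hindex, card_PSL_two_zmod hp2]
      _ = p * (p - 1) * (p + 1) := by rw [hsq, mul_assoc]
  exact (Nat.div_eq_of_eq_mul_left two_pos (Nat.eq_of_mul_eq_mul_right p.succ_pos h2).symm).symm
end
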